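/- arXiv:2204.03058 — 4 statements merged into one kernel-verified Lean document; each statement's English description precedes it below -/
import Mathlib

section
/- The set of positive cones of left-orders on a group G is a closed subset of the power set 2^G equipped with the product topology (identifying subsets of G with their characteristic functions in {0,1}^G). -/
def IsPositiveCone {G : Type*} [Group G] (P : Set G) : Prop :=
  (∀ x ∈ P, ∀ y ∈ P, x * y ∈ P) ∧
  (∀ g : G, g ∈ P ∨ g⁻¹ ∈ P ∨ g = 1) ∧
  (∀ g ∈ P, g⁻¹ ∉ P) ∧ (1 : G) ∉ P

/-- The set of positive cones is closed in `{0,1}^G` with the product topology. -/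
theorem isClosed_positiveCones (G : Type*) [Group G] :
    IsClosed {f : G → Bool | IsPositiveCone {g : G | f g = true}} := by
  have hO : ∀ (x : G), IsOpen {f : G → Bool | f x = true} := fun x => by
    have : {f : G → Bool | f x = true} = (fun f : G → Bool => f x) ⁻¹' {true} := by
      ext f; simp
    rw [this]
    exact (isOpen_discrete _).preimage (continuous_apply x)
  have hC : ∀ (x : G), IsClosed {f : G → Bool | f x = true} := fun x => by
    have : {f : G → Bool | f x = true} = (fun f : G → Bool => f x) ⁻¹' {true} := by
      ext f; simp
    rw [this]
    exact (isClosed_discrete _).preimage (continuous_apply x)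
  have key : {f : G → Bool | IsPositiveCone {g : G | f g = true}} =
      (⋂ x, ⋂ y, {f : G → Bool | f x = true}ᶜ ∪ {f | f y = true}ᶜ ∪ {f | f (x*y) = true}) ∩
      ((⋂ g, {f : G → Bool | f g = true} ∪ {f | f g⁻¹ = true} ∪ {f : G → Bool | g = 1}) ∩
      ((⋂ g, {f : G → Bool | f g = true}ᶜ ∪ {f | f g⁻¹ = true}ᶜ) ∩
      {f : G → Bool | f 1 = true}ᶜ)) := by
    ext f
    simp only [IsPositiveCone, Set.mem_setOf_eq, Set.mem_inter_iff, Set.mem_iInter,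
      Set.mem_union, Set.mem_compl_iff]
    constructor
    · rintro ⟨h1, h2, h3, h4⟩
      refine ⟨fun x y => ?_, ⟨fun g => ?_, ⟨fun g => ?_, h4⟩⟩⟩
      · have h := fun hx hy => h1 x hx y hy; tauto
      · have h := h2 g; tauto
      · have h := h3 g; tauto
    · rintro ⟨h1, h2, h3, h4⟩
      refine ⟨fun x hx y hy => ?_, ⟨fun g => ?_, ⟨fun g hg => ?_, h4⟩⟩⟩
      · have h := h1 x y; tauto
      · have h := h2 g; tauto
      · have h := h3 g; tauto
  rw [key]
  refine IsClosed.inter ?_ (IsClosed.inter ?_ (IsClosed.inter ?_ ?_))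
  · exact isClosed_iInter fun x => isClosed_iInter fun y =>
      (((hO x).isClosed_compl.union (hO y).isClosed_compl).union (hC (x*y)))
  · refine isClosed_iInter fun g => ((hC g).union (hC g⁻¹)).union ?_
    by_cases h : g = 1 <;> simp [h]
  · exact isClosed_iInter fun g => (hO g).isClosed_compl.union (hO g⁻¹).isClosed_compl
  · exact (hO 1).isClosed_compl
end

section
/- Let Γ = ⟨a, b, c | a² = b³ = c⁷ = abc⟩ and let φ : Γ → Homeo₊(ℝ) be an action by orientation-preserving homeomorphisms with no global fixed point (i.e., for every x ∈ ℝ there exists g ∈ Γ with φ(g)(x) ≠ x). Then the central element abc acts without fixed points: φ(abc)(x) ≠ x for all x ∈ ℝ. -/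
/-- Relations of `Γ = ⟨a, b, c | a² = b³ = c⁷ = abc⟩`. -/
def brieskornRels : Set (FreeGroup (Fin 3)) :=
  { FreeGroup.of 0 ^ 2 * (FreeGroup.of 0 * FreeGroup.of 1 * FreeGroup.of 2)⁻¹,
    FreeGroup.of 1 ^ 3 * (FreeGroup.of 0 * FreeGroup.of 1 * FreeGroup.of 2)⁻¹,
    FreeGroup.of 2 ^ 7 * (FreeGroup.of 0 * FreeGroup.of 1 * FreeGroup.of 2)⁻¹ }

abbrev BrieskornGroup := PresentedGroup brieskornRels

/-- A relator maps to 1 in the presented group. -/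
lemma brieskorn_rel_eq_one {r : FreeGroup (Fin 3)} (hr : r ∈ brieskornRels) :
    (PresentedGroup.mk brieskornRels r : BrieskornGroup) = 1 :=
  (QuotientGroup.eq_one_iff r).mpr (Subgroup.subset_normalClosure hr)

/-- For a strictly monotone map, a fixed point of a positive power is a fixed point. -/
lemma fix_of_pow_fix {f : Equiv.Perm ℝ} (hf : StrictMono f) {x : ℝ} {n : ℕ}
    (hn : 0 < n) (h : (f ^ n) x = x) : f x = x := by
  rcases lt_trichotomy (f x) x with hlt | heq | hgt
  · exfalso
    have key : ∀ m : ℕ, (f ^ (m + 1)) x < x := by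
      intro m
      induction m with
      | zero => simpa using hlt
      | succ k ih =>
        have : (f ^ (k + 2)) x = f ((f ^ (k + 1)) x) := by
          rw [pow_succ']; rfl
        rw [this]
        exact lt_trans (hf ih) hlt
    obtain ⟨m, rfl⟩ := Nat.exists_eq_succ_of_ne_zero hn.ne'
    have := key m
    rw [h] at this
    exact lt_irrefl _ this
  · exact heq
  · exfalso
    have key : ∀ m : ℕ, x < (f ^ (m + 1)) x := by
      intro m
      induction m with
      | zero => simpa using hgt
      | succ k ih =>
        have : (f ^ (k + 2)) x = f ((f ^ (k + 1)) x) := by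
          rw [pow_succ']; rfl
        rw [this]
        exact lt_trans hgt (hf ih)
    obtain ⟨m, rfl⟩ := Nat.exists_eq_succ_of_ne_zero hn.ne'
    have := key m
    rw [h] at this
    exact lt_irrefl _ this

/-- If `Γ = ⟨a,b,c | a² = b³ = c⁷ = abc⟩` acts on the line by orientation-preserving
homeomorphisms without global fixed points, then `abc` acts freely. -/
theorem central_acts_freely
    (φ : BrieskornGroup →* Equiv.Perm ℝ)
    (hmono : ∀ g : BrieskornGroup, StrictMono (φ g))
    (hcont : ∀ g : BrieskornGroup, Continuous (φ g))
    (hnofix : ∀ x : ℝ, ∃ g : BrieskornGroup, φ g x ≠ x) :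
    ∀ x : ℝ,
      φ (PresentedGroup.of 0 * PresentedGroup.of 1 * PresentedGroup.of 2) x ≠ x := by
  intro x hfix
  set a : BrieskornGroup := PresentedGroup.of 0
  set b : BrieskornGroup := PresentedGroup.of 1
  set c : BrieskornGroup := PresentedGroup.of 2
  -- relations in the presented group
  have ha2 : a ^ 2 = a * b * c := by
    have := brieskorn_rel_eq_one (r := FreeGroup.of 0 ^ 2 *
      (FreeGroup.of 0 * FreeGroup.of 1 * FreeGroup.of 2)⁻¹) (by left; rfl)
    simp only [map_mul, map_pow, map_inv] at this
    exact mul_inv_eq_one.mp this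
  have hb3 : b ^ 3 = a * b * c := by
    have := brieskorn_rel_eq_one (r := FreeGroup.of 1 ^ 3 *
      (FreeGroup.of 0 * FreeGroup.of 1 * FreeGroup.of 2)⁻¹) (by right; left; rfl)
    simp only [map_mul, map_pow, map_inv] at this
    exact mul_inv_eq_one.mp this
  have hc7 : c ^ 7 = a * b * c := by
    have := brieskorn_rel_eq_one (r := FreeGroup.of 2 ^ 7 *
      (FreeGroup.of 0 * FreeGroup.of 1 * FreeGroup.of 2)⁻¹) (by right; right; rfl)
    simp only [map_mul, map_pow, map_inv] at this
    exact mul_inv_eq_one.mp this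
  -- the generators fix x
  have hafix : φ a x = x := by
    apply fix_of_pow_fix (hmono a) (n := 2) (by norm_num)
    rw [← map_pow, ha2]; exact hfix
  have hbfix : φ b x = x := by
    apply fix_of_pow_fix (hmono b) (n := 3) (by norm_num)
    rw [← map_pow, hb3]; exact hfix
  have hcfix : φ c x = x := by
    apply fix_of_pow_fix (hmono c) (n := 7) (by norm_num)
    rw [← map_pow, hc7]; exact hfix
  -- hence every element fixes x
  obtain ⟨g, hg⟩ := hnofix x
  apply hg
  have hmem : g ∈ Subgroup.closure (Set.range (PresentedGroup.of :
      Fin 3 → BrieskornGroup)) := by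
    rw [PresentedGroup.closure_range_of]; trivial
  refine Subgroup.closure_induction (p := fun g _ => φ g x = x)
    (fun g' hg' => ?_) (by simp) (fun g₁ g₂ _ _ h1 h2 => ?_) (fun g _ h => ?_) hmem
  · obtain ⟨i, rfl⟩ := hg'
    fin_cases i
    · exact hafix
    · exact hbfix
    · exact hcfix
  · simp [Equiv.Perm.mul_apply, h2, h1]
  · have : φ g (φ g⁻¹ x) = φ g x := by
      rw [← Equiv.Perm.mul_apply, ← map_mul, mul_inv_cancel, h]
      simp
    exact (φ g).injective this
end

section
/- The group Γ = ⟨a, b, c | a² = b³ = c⁷ = abc⟩ is perfect: its abelianization is trivial. -/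
/-!
In the abelianization the relations become linear: `x² = xyz` gives `x = yz`, then
`y³ = xyz = y²z²` gives `y = z²`, and finally `z⁷ = xyz = y²z² = z⁶` gives `z = 1`.
This is the arithmetic fact `2·3·7 - 2·3 - 3·7 - 7·2 = 1`: the abelianization of
`⟨a, b, c | a^p = b^q = c^r = abc⟩` has order `|pqr - pq - qr - rp|`.
-/

theorem eq_one_of_pow_two_eq_pow_three_eq_pow_seven_eq_mul {G : Type*} [CommGroup G]
    {x y z : G} (hx : x ^ 2 = x * y * z) (hy : y ^ 3 = x * y * z) (hz : z ^ 7 = x * y * z) :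
    x = 1 ∧ y = 1 ∧ z = 1 := by
  have hx' : x = y * z := mul_left_cancel (a := x) (by rw [← pow_two, hx, mul_assoc])
  have hy' : y = z ^ 2 := mul_left_cancel (a := y ^ 2) <| by
    rw [← pow_succ, hy, hx']; simp only [pow_two]; ac_rfl
  have hz' : z = 1 := mul_left_cancel (a := z ^ 6) <| by
    rw [← pow_succ, hz, hx', hy', mul_one]; simp only [pow_succ, pow_zero, one_mul]; ac_rfl
  have hy1 : y = 1 := by rw [hy', hz', one_pow]
  exact ⟨by rw [hx', hy1, hz', one_mul], hy1, hz'⟩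

theorem PresentedGroup.subsingleton_abelianization {α : Type*} {rels : Set (FreeGroup α)}
    (h : ∀ i, Abelianization.of (PresentedGroup.of i : PresentedGroup rels) = 1) :
    Subsingleton (Abelianization (PresentedGroup rels)) := by
  have hid : MonoidHom.id (Abelianization (PresentedGroup rels)) = 1 :=
    Abelianization.hom_ext _ _ (PresentedGroup.ext h)
  exact ⟨fun u v => (DFunLike.congr_fun hid u).trans (DFunLike.congr_fun hid v).symm⟩

/-- `Γ = ⟨a,b,c | a² = b³ = c⁷ = abc⟩` is perfect: its abelianization is trivial. -/
theorem brieskornGroup_perfect : Subsingleton (Abelianization BrieskornGroup) := by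
  have hrel : ∀ r ∈ brieskornRels,
      Abelianization.of (PresentedGroup.mk brieskornRels r) = 1 := fun r hr => by
    rw [PresentedGroup.one_of_mem hr, map_one]
  have h₂ := hrel _ (.inl rfl)
  have h₃ := hrel _ (.inr (.inl rfl))
  have h₇ := hrel _ (.inr (.inr rfl))
  simp only [map_mul, map_inv, map_pow, mul_inv_eq_one] at h₂ h₃ h₇
  obtain ⟨ha, hb, hc⟩ := eq_one_of_pow_two_eq_pow_three_eq_pow_seven_eq_mul h₂ h₃ h₇
  refine PresentedGroup.subsingleton_abelianization fun i => ?_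
  fin_cases i
  exacts [ha, hb, hc]
end

section
/- Let G be a countable group and ≺ a left-order on G with dynamical realization φ : G → Homeo₊(ℝ) with base point p (meaning φ(g)(p) > p iff g ∈ P_≺). If F ⊆ G is finite and V ⊆ ℝ is a set containing p such that for all f ∈ F and x ∈ V one has φ(f)(x) > x iff φ(f)(p) > p, then for any g ∈ G with φ(g)(p') ∈ V for some point p' realizing a left-order ≺' via φ, the conjugated order ≺'_g agrees with ≺ on F. -/
/-- If `g` sends the base point `p'` of the realization of `≺'` into a set `V`
on which every `f ∈ F` behaves as at the base point `p` of the realization of `≺`,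
then the conjugated order `≺'_g` agrees with `≺` on `F`. -/
theorem conjugated_order_agrees {G : Type*} [Group G] [Countable G]
    (φ : G →* Equiv.Perm ℝ)
    (hmono : ∀ g : G, StrictMono (φ g)) (hcont : ∀ g : G, Continuous (φ g))
    (P P' : Set G) (hP : IsPositiveCone P) (hP' : IsPositiveCone P')
    (p p' : ℝ)
    (hreal : ∀ g : G, φ g p > p ↔ g ∈ P)
    (hreal' : ∀ g : G, φ g p' > p' ↔ g ∈ P')
    (F : Finset G) (V : Set ℝ) (hpV : p ∈ V)
    (hV : ∀ f ∈ F, ∀ x ∈ V, (φ f x > x ↔ φ f p > p))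
    (g : G) (hg : φ g p' ∈ V) :
    ∀ f ∈ F, (f ∈ P ↔ g⁻¹ * f * g ∈ P') := by
  intro f hf
  have key : φ (g⁻¹ * f * g) p' > p' ↔ φ f (φ g p') > φ g p' := by
    simp only [gt_iff_lt]; rw [← (hmono g).lt_iff_lt]
    have : φ g (φ (g⁻¹ * f * g) p') = φ f (φ g p') := by
      have : φ g * φ (g⁻¹ * f * g) = φ f * φ g := by
        rw [← map_mul, ← map_mul]; group
      calc φ g (φ (g⁻¹ * f * g) p') = (φ g * φ (g⁻¹ * f * g)) p' := rfl
        _ = (φ f * φ g) p' := by rw [this]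
        _ = φ f (φ g p') := rfl
    rw [this]
  rw [← hreal', key, hV f hf _ hg, hreal]
end
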